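/- arXiv:math/0505064 — 2 statements merged into one kernel-verified Lean document; each statement's English description precedes it below -/
import Mathlib

section
/- The Iwahori-Hecke algebra H_n(q_1,q_2) is a free R-module of rank n!, with basis {T_w : w ∈ S_n}, where T_w = T_{i_1}···T_{i_k} for any reduced word w = s_{i_1}···s_{i_k} in the adjacent transpositions. -/
open FreeAlgebra Equiv

/-- Defining relations of the Iwahori-Hecke algebra with `m` generators. -/
inductive HeckeRel (R : Type*) [CommRing R] (q1 q2 : R) (m : ℕ) :
    FreeAlgebra R (Fin m) → FreeAlgebra R (Fin m) → Prop
  | comm (i j : Fin m) (h : (i : ℕ) + 1 < (j : ℕ)) :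
      HeckeRel R q1 q2 m (ι R i * ι R j) (ι R j * ι R i)
  | braid (i j : Fin m) (h : (j : ℕ) = (i : ℕ) + 1) :
      HeckeRel R q1 q2 m (ι R i * ι R j * ι R i) (ι R j * ι R i * ι R j)
  | quad (i : Fin m) :
      HeckeRel R q1 q2 m
        ((ι R i - algebraMap R (FreeAlgebra R (Fin m)) q1) *
          (ι R i - algebraMap R (FreeAlgebra R (Fin m)) q2)) 0

/-- The Iwahori-Hecke algebra `H_{m+1}(q1,q2)`, with `m` generators. -/
abbrev HeckeAlgebra (R : Type*) [CommRing R] (q1 q2 : R) (m : ℕ) :=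
  RingQuot (HeckeRel R q1 q2 m)

/-- The generator `T_i` of the Iwahori-Hecke algebra. -/
noncomputable def heckeT (R : Type*) [CommRing R] (q1 q2 : R) (m : ℕ) (i : Fin m) :
    HeckeAlgebra R q1 q2 m :=
  RingQuot.mkAlgHom R (HeckeRel R q1 q2 m) (ι R i)

/-- Defining relations of the braid group on `m+1` strands (with `m` Artin generators). -/
def braidRels (m : ℕ) : Set (FreeGroup (Fin m)) :=
  {x | (∃ i j : Fin m, (i : ℕ) + 1 < (j : ℕ) ∧
        x = FreeGroup.of i * FreeGroup.of j * (FreeGroup.of i)⁻¹ * (FreeGroup.of j)⁻¹) ∨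
       (∃ i j : Fin m, (j : ℕ) = (i : ℕ) + 1 ∧
        x = FreeGroup.of i * FreeGroup.of j * FreeGroup.of i *
            (FreeGroup.of j)⁻¹ * (FreeGroup.of i)⁻¹ * (FreeGroup.of j)⁻¹)}

/-- The braid group `B_{m+1}` (with `m` Artin generators). -/
abbrev BraidGroup (m : ℕ) := PresentedGroup (braidRels m)

/-- The Artin generator `σ_i`. -/
def braidGen (m : ℕ) (i : Fin m) : BraidGroup m := PresentedGroup.of i

/-- The adjacent transposition `(i, i+1)` in the symmetric group on `m+1` letters. -/
def simpleRefl (m : ℕ) (i : Fin m) : Equiv.Perm (Fin (m + 1)) :=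
  Equiv.swap i.castSucc i.succ

/-- `l` is a reduced word for the permutation `w`. -/
def IsReducedWord (m : ℕ) (w : Equiv.Perm (Fin (m + 1))) (l : List (Fin m)) : Prop :=
  (l.map (simpleRefl m)).prod = w ∧
    ∀ l' : List (Fin m), (l'.map (simpleRefl m)).prod = w → l.length ≤ l'.length

/-- `l` is a partition of `n`. -/
def IsPartition (n : ℕ) (l : List ℕ) : Prop :=
  l.Pairwise (· ≥ ·) ∧ (∀ x ∈ l, 0 < x) ∧ l.sum = n

/-- `a` and `b` belong to the same block of the partition `lam`. -/
def sameBlock (lam : List ℕ) (a b : ℕ) : Prop :=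
  ∃ j, (lam.take j).sum ≤ a ∧ a < (lam.take (j + 1)).sum ∧
    (lam.take j).sum ≤ b ∧ b < (lam.take (j + 1)).sum

/-- The Young subgroup `S_λ` of `S_n`, as a set of permutations. -/
def youngSubgroupSet (lam : List ℕ) (n : ℕ) : Set (Equiv.Perm (Fin n)) :=
  {w | ∀ x : Fin n, sameBlock lam (x : ℕ) ((w x : ℕ))}

/-- `mu` dominates `lam`. -/
def Dominates (mu lam : List ℕ) : Prop :=
  ∀ j, ((lam.take j).sum ≤ (mu.take j).sum)

/-- Number of cycles of a permutation, counting fixed points as 1-cycles. -/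
def cycleCount {n : ℕ} (w : Equiv.Perm (Fin n)) : ℕ :=
  w.cycleType.card + (n - w.cycleType.sum)

/-- The word in (0-indexed) braid generators for the braid `b_λ`. -/
def blockWord : List ℕ → List ℕ
  | [] => []
  | a :: rest => (List.range (a - 1)).reverse ++ (blockWord rest).map (· + a)


namespace HeckeProof

open Finsupp

variable {m : ℕ}

/-- inversion set -/
def invSet {n : ℕ} (w : Equiv.Perm (Fin n)) : Finset (Fin n × Fin n) :=
  Finset.univ.filter (fun p => p.1 < p.2 ∧ w p.2 < w p.1)

def len {n : ℕ} (w : Equiv.Perm (Fin n)) : ℕ := (invSet w).card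

lemma swap_val (j : Fin m) (x : Fin (m+1)) :
    ((Equiv.swap j.castSucc j.succ) x : ℕ) =
      if (x:ℕ) = (j:ℕ) then (j:ℕ)+1 else if (x:ℕ) = (j:ℕ)+1 then (j:ℕ) else (x:ℕ) := by
  rw [Equiv.swap_apply_def]
  have h1 : (x = j.castSucc) ↔ ((x:ℕ) = (j:ℕ)) := by
    rw [Fin.ext_iff]; simp
  have h2 : (x = j.succ) ↔ ((x:ℕ) = (j:ℕ)+1) := by
    rw [Fin.ext_iff]; simp
  split_ifs with a b <;> simp_all

lemma swap_lt_swap_iff (j : Fin m) {a b : Fin (m+1)} (hab : a < b) :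
    (Equiv.swap j.castSucc j.succ a < Equiv.swap j.castSucc j.succ b) ↔
      ¬(a = j.castSucc ∧ b = j.succ) := by
  have ha : (a = j.castSucc) ↔ ((a:ℕ) = (j:ℕ)) := by rw [Fin.ext_iff]; simp
  have hb : (b = j.succ) ↔ ((b:ℕ) = (j:ℕ)+1) := by rw [Fin.ext_iff]; simp
  rw [Fin.lt_def] at hab ⊢
  rw [swap_val, swap_val, ha, hb]
  split_ifs <;> omega

lemma len_mul_swap_asc (w : Equiv.Perm (Fin (m+1))) (j : Fin m)
    (h : w j.castSucc < w j.succ) :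
    len (w * Equiv.swap j.castSucc j.succ) = len w + 1 := by
  set t := Equiv.swap j.castSucc j.succ with ht
  have htt : ∀ x, t (t x) = x := fun x => Equiv.swap_apply_self _ _ x
  have hset : invSet (w * t) =
      insert (j.castSucc, j.succ) ((invSet w).image (fun p => (t p.1, t p.2))) := by
    ext ⟨a, b⟩
    simp only [invSet, Finset.mem_filter]
    simp only [invSet, Finset.mem_filter, Finset.mem_univ, true_and, Finset.mem_insert,
      Finset.mem_image, Equiv.Perm.mul_apply, Prod.mk.injEq, Prod.exists]
    constructor
    · rintro ⟨hab, hw⟩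
      by_cases hc : a = j.castSucc ∧ b = j.succ
      · exact Or.inl hc
      · refine Or.inr ⟨t a, t b, ⟨?_, ?_⟩, htt a, htt b⟩
        · exact (swap_lt_swap_iff j hab).2 hc
        · exact hw
    · rintro (⟨rfl, rfl⟩ | ⟨x, y, ⟨hxy, hw⟩, rfl, rfl⟩)
      · refine ⟨Fin.castSucc_lt_succ (i := j), ?_⟩
        rw [Equiv.swap_apply_left, Equiv.swap_apply_right]
        exact h
      · have hne : ¬(x = j.castSucc ∧ y = j.succ) := by
          rintro ⟨rfl, rfl⟩
          exact absurd h (not_lt.2 hw.le)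
        refine ⟨(swap_lt_swap_iff j hxy).2 hne, ?_⟩
        rwa [htt, htt]
  have hnotmem : (j.castSucc, j.succ) ∉ ((invSet w).image (fun p => (t p.1, t p.2))) := by
    simp only [Finset.mem_image, Prod.mk.injEq, Prod.exists, not_exists, not_and]
    rintro x y hxy h1 h2
    have hx : x = j.succ := by rw [← htt x, h1, ht, Equiv.swap_apply_left]
    have hy : y = j.castSucc := by rw [← htt y, h2, ht, Equiv.swap_apply_right]
    simp only [invSet, Finset.mem_filter] at hxy
    subst hx; subst hy
    exact absurd hxy.2.1 (not_lt.2 (Fin.castSucc_lt_succ (i := j)).le)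
  have hinj : Function.Injective (fun p : Fin (m+1) × Fin (m+1) => (t p.1, t p.2)) := by
    rintro ⟨x1, y1⟩ ⟨x2, y2⟩ hp
    simp only [Prod.mk.injEq] at hp
    exact Prod.ext (t.injective hp.1) (t.injective hp.2)
  rw [len, len, hset, Finset.card_insert_of_notMem hnotmem,
    Finset.card_image_of_injective _ hinj, Nat.add_comm]

lemma len_inv (w : Equiv.Perm (Fin (m+1))) : len w⁻¹ = len w := by
  have hset : invSet w⁻¹ = (invSet w).image (fun p => (w p.2, w p.1)) := by
    ext ⟨a, b⟩
    simp only [invSet, Finset.mem_filter, Finset.mem_univ, true_and, Finset.mem_image,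
      Prod.mk.injEq, Prod.exists]
    constructor
    · rintro ⟨hab, hw⟩
      exact ⟨w⁻¹ b, w⁻¹ a, ⟨hw, by simpa using hab⟩, by simp, by simp⟩
    · rintro ⟨x, y, ⟨hxy, hw⟩, rfl, rfl⟩
      exact ⟨hw, by simpa using hxy⟩
  have hinj : Function.Injective (fun p : Fin (m+1) × Fin (m+1) => (w p.2, w p.1)) := by
    rintro ⟨x1, y1⟩ ⟨x2, y2⟩ hp
    simp only [Prod.mk.injEq] at hp
    exact Prod.ext (w.injective hp.2) (w.injective hp.1)
  rw [len, len, hset, Finset.card_image_of_injective _ hinj]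

lemma len_one : len (1 : Equiv.Perm (Fin (m+1))) = 0 := by
  rw [len, Finset.card_eq_zero, invSet]
  ext ⟨a, b⟩
  simp only [Finset.mem_filter]
  simp only [Finset.mem_filter, Finset.mem_univ, true_and, Equiv.Perm.one_apply,
    Finset.notMem_empty, iff_false, not_and]
  exact fun h => not_lt.2 h.le

/-- left-ascent: multiplying on the left by `simpleRefl m i` increases length -/
def ascL (i : Fin m) (w : Equiv.Perm (Fin (m+1))) : Prop :=
  w⁻¹ i.castSucc < w⁻¹ i.succ

/-- right-ascent -/
def ascR (j : Fin m) (w : Equiv.Perm (Fin (m+1))) : Prop :=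
  w j.castSucc < w j.succ

instance (i : Fin m) (w : Equiv.Perm (Fin (m+1))) : Decidable (ascL i w) := by
  unfold ascL; infer_instance

instance (j : Fin m) (w : Equiv.Perm (Fin (m+1))) : Decidable (ascR j w) := by
  unfold ascR; infer_instance

lemma not_ascR_iff (j : Fin m) (w : Equiv.Perm (Fin (m+1))) :
    ¬ascR j w ↔ w j.succ < w j.castSucc := by
  rw [ascR, not_lt, lt_iff_le_and_ne]
  have : w j.succ ≠ w j.castSucc := by
    simp only [ne_eq, EmbeddingLike.apply_eq_iff_eq]
    exact fun h => absurd h (Fin.castSucc_lt_succ (i := j)).ne'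
  tauto

lemma not_ascL_iff (i : Fin m) (w : Equiv.Perm (Fin (m+1))) :
    ¬ascL i w ↔ w⁻¹ i.succ < w⁻¹ i.castSucc := not_ascR_iff i w⁻¹

lemma len_mul_asc {w : Equiv.Perm (Fin (m+1))} {j : Fin m} (h : ascR j w) :
    len (w * simpleRefl m j) = len w + 1 := len_mul_swap_asc w j h

lemma len_mul_desc {w : Equiv.Perm (Fin (m+1))} {j : Fin m} (h : ¬ascR j w) :
    len w = len (w * simpleRefl m j) + 1 := by
  have h2 : ascR j (w * simpleRefl m j) := by
    rw [ascR, Equiv.Perm.mul_apply, Equiv.Perm.mul_apply, simpleRefl,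
      Equiv.swap_apply_left, Equiv.swap_apply_right]
    exact (not_ascR_iff j w).1 h
  have := len_mul_asc h2
  rwa [mul_assoc, simpleRefl, Equiv.swap_mul_self, mul_one] at this

lemma simpleRefl_inv (i : Fin m) : (simpleRefl m i)⁻¹ = simpleRefl m i := by
  rw [simpleRefl, Equiv.swap_inv]

lemma ascL_iff_ascR_inv (i : Fin m) (w : Equiv.Perm (Fin (m+1))) :
    ascL i w ↔ ascR i w⁻¹ := Iff.rfl

lemma len_simple_mul_asc {w : Equiv.Perm (Fin (m+1))} {i : Fin m} (h : ascL i w) :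
    len (simpleRefl m i * w) = len w + 1 := by
  have : len ((simpleRefl m i * w)⁻¹) = len w⁻¹ + 1 := by
    rw [mul_inv_rev, simpleRefl_inv]
    exact len_mul_asc ((ascL_iff_ascR_inv i w).1 h)
  rwa [len_inv, len_inv] at this

lemma len_simple_mul_desc {w : Equiv.Perm (Fin (m+1))} {i : Fin m} (h : ¬ascL i w) :
    len w = len (simpleRefl m i * w) + 1 := by
  have : len w⁻¹ = len ((simpleRefl m i * w)⁻¹) + 1 := by
    rw [mul_inv_rev, simpleRefl_inv]
    exact len_mul_desc (fun hc => h ((ascL_iff_ascR_inv i w).2 hc))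
  rwa [len_inv, len_inv] at this

lemma ascL_simple_mul (i : Fin m) (w : Equiv.Perm (Fin (m+1))) :
    ascL i (simpleRefl m i * w) ↔ ¬ascL i w := by
  rw [ascL, ascL, not_lt, mul_inv_rev, simpleRefl_inv, Equiv.Perm.mul_apply,
    Equiv.Perm.mul_apply, simpleRefl, Equiv.swap_apply_left, Equiv.swap_apply_right]
  rw [lt_iff_le_and_ne]
  have : w⁻¹ i.succ ≠ w⁻¹ i.castSucc := by
    simp only [ne_eq, EmbeddingLike.apply_eq_iff_eq]
    exact fun h => absurd h (Fin.castSucc_lt_succ (i := i)).ne'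
  tauto

lemma descent_exists {w : Equiv.Perm (Fin (m+1))} (hw : w ≠ 1) :
    ∃ i : Fin m, ¬ascL i w := by
  by_contra hc
  push_neg at hc
  apply hw
  have hmono : StrictMono (w⁻¹ : Equiv.Perm (Fin (m+1))) := by
    rw [Fin.strictMono_iff_lt_succ]
    intro i
    exact hc i
  have : (w⁻¹ : Equiv.Perm (Fin (m+1))) = (1 : Equiv.Perm (Fin (m+1))) := by
    have hr : Set.range (w⁻¹ : Equiv.Perm (Fin (m+1))) =
        Set.range ((1 : Equiv.Perm (Fin (m+1))) : Fin (m+1) → Fin (m+1)) := by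
      simp [Equiv.range_eq_univ]
    have := (StrictMono.range_inj hmono (fun a b hab => by simpa using hab)).1 hr
    exact Equiv.ext (fun x => congrFun this x)
  rw [← inv_inv w, this, inv_one]

lemma len_eq_zero_iff {w : Equiv.Perm (Fin (m+1))} : len w = 0 ↔ w = 1 := by
  constructor
  · intro h
    by_contra hw
    obtain ⟨i, hi⟩ := descent_exists hw
    have := len_simple_mul_desc hi
    omega
  · rintro rfl; exact len_one

/-- product of a word -/
def wp (l : List (Fin m)) : Equiv.Perm (Fin (m+1)) := (l.map (simpleRefl m)).prod

/-- reduced word -/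
def Red (l : List (Fin m)) : Prop := len (wp l) = l.length

@[simp] lemma wp_nil : wp ([] : List (Fin m)) = 1 := rfl

lemma wp_cons (i : Fin m) (l : List (Fin m)) : wp (i :: l) = simpleRefl m i * wp l := by
  simp [wp]

lemma simple_mul_cancel (i : Fin m) (w : Equiv.Perm (Fin (m+1))) :
    simpleRefl m i * (simpleRefl m i * w) = w := by
  rw [← mul_assoc, simpleRefl, Equiv.swap_mul_self, one_mul]

lemma len_wp_le (l : List (Fin m)) : len (wp l) ≤ l.length := by
  induction l with
  | nil => simp [len_one]
  | cons i l ih =>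
    rw [wp_cons]
    by_cases h : ascL i (wp l)
    · rw [len_simple_mul_asc h]; simpa using ih
    · have := len_simple_mul_desc h
      simp only [List.length_cons]
      omega

lemma red_nil : Red ([] : List (Fin m)) := by simp [Red, len_one]

lemma red_cons_iff (i : Fin m) (l : List (Fin m)) :
    Red (i :: l) ↔ ascL i (wp l) ∧ Red l := by
  constructor
  · intro h
    rw [Red, wp_cons, List.length_cons] at h
    have hle := len_wp_le l
    by_cases ha : ascL i (wp l)
    · have := len_simple_mul_asc ha
      exact ⟨ha, by rw [Red]; omega⟩
    · have := len_simple_mul_desc ha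
      omega
  · rintro ⟨ha, hr⟩
    rw [Red, wp_cons, List.length_cons, len_simple_mul_asc ha, hr]

lemma exists_red (w : Equiv.Perm (Fin (m+1))) : ∃ l, Red l ∧ wp l = w := by
  generalize hn : len w = n
  induction n using Nat.strong_induction_on generalizing w with
  | _ n ih =>
    by_cases hw : w = 1
    · exact ⟨[], red_nil, by simp [hw]⟩
    · obtain ⟨i, hi⟩ := descent_exists hw
      have hd := len_simple_mul_desc hi
      obtain ⟨l, hl, hpl⟩ := ih (len (simpleRefl m i * w)) (by omega) _ rfl
      refine ⟨i :: l, ?_, ?_⟩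
      · rw [red_cons_iff, hpl]
        exact ⟨(ascL_simple_mul i w).2 hi, hl⟩
      · rw [wp_cons, hpl, simple_mul_cancel]

lemma isReducedWord_iff (w : Equiv.Perm (Fin (m+1))) (l : List (Fin m)) :
    IsReducedWord m w l ↔ wp l = w ∧ Red l := by
  constructor
  · rintro ⟨hp, hmin⟩
    have hp' : wp l = w := hp
    obtain ⟨l0, hl0, hpl0⟩ := exists_red w
    have h1 : l.length ≤ l0.length := hmin l0 hpl0
    have h2 : len w ≤ l.length := hp' ▸ len_wp_le l
    rw [Red, hpl0] at hl0
    exact ⟨hp', by rw [Red, hp']; omega⟩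
  · rintro ⟨hp, hr⟩
    refine ⟨hp, fun l' hl' => ?_⟩
    have h3 : len (wp l') ≤ l'.length := len_wp_le l'
    have hl'' : wp l' = w := hl'
    rw [Red, hp] at hr
    rw [hl''] at h3
    omega

/- pointwise facts about simple reflections -/

lemma simpleRefl_apply_castSucc (i : Fin m) : simpleRefl m i i.castSucc = i.succ :=
  Equiv.swap_apply_left _ _

lemma simpleRefl_apply_succ (i : Fin m) : simpleRefl m i i.succ = i.castSucc :=
  Equiv.swap_apply_right _ _

lemma simpleRefl_apply_of_ne {i : Fin m} {x : Fin (m+1)} (h1 : (x:ℕ) ≠ (i:ℕ))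
    (h2 : (x:ℕ) ≠ (i:ℕ)+1) : simpleRefl m i x = x :=
  Equiv.swap_apply_of_ne_of_ne (by rw [ne_eq, Fin.ext_iff]; simpa using h1)
    (by rw [ne_eq, Fin.ext_iff]; simpa using h2)

set_option maxHeartbeats 2000000 in
lemma braid_perm {i j : Fin m} (hj : (j:ℕ) = (i:ℕ)+1) :
    simpleRefl m i * simpleRefl m j * simpleRefl m i
      = simpleRefl m j * simpleRefl m i * simpleRefl m j := by
  have hi := i.isLt
  have hjlt := j.isLt
  ext x
  have hx := x.isLt
  simp only [simpleRefl, Equiv.Perm.mul_apply]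
  simp only [swap_val]
  split_ifs <;> omega

set_option maxHeartbeats 1000000 in
lemma comm_perm {i j : Fin m} (h : (i:ℕ)+1 < (j:ℕ)) :
    simpleRefl m i * simpleRefl m j = simpleRefl m j * simpleRefl m i := by
  have hi := i.isLt
  have hjlt := j.isLt
  ext x
  have hx := x.isLt
  simp only [simpleRefl, Equiv.Perm.mul_apply]
  simp only [swap_val]
  split_ifs <;> omega

lemma inv_simple_mul_apply (i : Fin m) (w : Equiv.Perm (Fin (m+1))) (x : Fin (m+1)) :
    (simpleRefl m i * w)⁻¹ x = w⁻¹ (simpleRefl m i x) := by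
  rw [mul_inv_rev, simpleRefl_inv, Equiv.Perm.mul_apply]

lemma ascL_simple_mul_of_far {i j : Fin m} (h : (i:ℕ)+1 < (j:ℕ) ∨ (j:ℕ)+1 < (i:ℕ))
    (w : Equiv.Perm (Fin (m+1))) : ascL j (simpleRefl m i * w) ↔ ascL j w := by
  rw [ascL, ascL, inv_simple_mul_apply, inv_simple_mul_apply,
    simpleRefl_apply_of_ne (x := j.castSucc) (by simp; omega) (by simp; omega),
    simpleRefl_apply_of_ne (x := j.succ) (by simp; omega) (by simp; omega)]

lemma castSucc_eq_succ {i j : Fin m} (hj : (j:ℕ) = (i:ℕ)+1) : j.castSucc = i.succ := by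
  rw [Fin.ext_iff]; simpa using hj

lemma adj_desc1 {i j : Fin m} (hj : (j:ℕ) = (i:ℕ)+1) {w : Equiv.Perm (Fin (m+1))}
    (h1 : ¬ascL i w) (h2 : ¬ascL j w) : ¬ascL j (simpleRefl m i * w) := by
  rw [not_ascL_iff] at h1 h2 ⊢
  rw [inv_simple_mul_apply, inv_simple_mul_apply, castSucc_eq_succ hj,
    simpleRefl_apply_succ, simpleRefl_apply_of_ne (x := j.succ) (by simp; omega) (by simp; omega)]
  rw [← castSucc_eq_succ hj] at h1
  exact h2.trans h1

lemma adj_desc2 {i j : Fin m} (hj : (j:ℕ) = (i:ℕ)+1) {w : Equiv.Perm (Fin (m+1))}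
    (h1 : ¬ascL i w) (h2 : ¬ascL j w) :
    ¬ascL i (simpleRefl m j * (simpleRefl m i * w)) := by
  rw [not_ascL_iff] at h2 ⊢
  simp only [inv_simple_mul_apply]
  rw [simpleRefl_apply_of_ne (i := j) (x := i.castSucc) (by simp; omega) (by simp; omega),
    simpleRefl_apply_castSucc, ← castSucc_eq_succ hj, simpleRefl_apply_castSucc,
    simpleRefl_apply_of_ne (i := i) (x := j.succ) (by simp; omega) (by simp; omega)]
  exact h2

section Ops

variable {R : Type*} [CommRing R]

/-- the free module on the symmetric group -/
abbrev EE (R : Type*) [CommRing R] (m : ℕ) : Type _ := Equiv.Perm (Fin (m+1)) →₀ R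

/-- left multiplication operator -/
noncomputable def Lop (q1 q2 : R) (i : Fin m) : EE R m →ₗ[R] EE R m :=
  Finsupp.lift (EE R m) R _ (fun w =>
    if ascL i w then Finsupp.single (simpleRefl m i * w) 1
    else (q1+q2) • Finsupp.single w 1 - (q1*q2) • Finsupp.single (simpleRefl m i * w) 1)

/-- right multiplication operator -/
noncomputable def Rop (q1 q2 : R) (j : Fin m) : EE R m →ₗ[R] EE R m :=
  Finsupp.lift (EE R m) R _ (fun w =>
    if ascR j w then Finsupp.single (w * simpleRefl m j) 1
    else (q1+q2) • Finsupp.single w 1 - (q1*q2) • Finsupp.single (w * simpleRefl m j) 1)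

lemma Lop_single (q1 q2 : R) (i : Fin m) (w : Equiv.Perm (Fin (m+1))) :
    Lop q1 q2 i (Finsupp.single w (1:R)) =
      if ascL i w then Finsupp.single (simpleRefl m i * w) 1
      else (q1+q2) • Finsupp.single w 1 - (q1*q2) • Finsupp.single (simpleRefl m i * w) 1 := by
  rw [Lop, Finsupp.lift_apply, Finsupp.sum_single_index] <;> simp

lemma Rop_single (q1 q2 : R) (j : Fin m) (w : Equiv.Perm (Fin (m+1))) :
    Rop q1 q2 j (Finsupp.single w (1:R)) =
      if ascR j w then Finsupp.single (w * simpleRefl m j) 1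
      else (q1+q2) • Finsupp.single w 1 - (q1*q2) • Finsupp.single (w * simpleRefl m j) 1 := by
  rw [Rop, Finsupp.lift_apply, Finsupp.sum_single_index] <;> simp

lemma single_eq_smul (w : Equiv.Perm (Fin (m+1))) (b : R) :
    Finsupp.single w b = b • Finsupp.single w (1:R) := by
  rw [Finsupp.smul_single, smul_eq_mul, mul_one]

lemma lhom_ext_one {φ ψ : EE R m →ₗ[R] EE R m}
    (h : ∀ w, φ (Finsupp.single w 1) = ψ (Finsupp.single w 1)) : φ = ψ := by
  apply Finsupp.lhom_ext
  intro w b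
  rw [single_eq_smul, map_smul, map_smul, h]

lemma mul_simple_cancel (j : Fin m) (w : Equiv.Perm (Fin (m+1))) :
    (w * simpleRefl m j) * simpleRefl m j = w := by
  rw [mul_assoc, simpleRefl, Equiv.swap_mul_self, mul_one]

lemma ascR_mul_simple (j : Fin m) (w : Equiv.Perm (Fin (m+1))) :
    ascR j (w * simpleRefl m j) ↔ ¬ascR j w := by
  rw [ascR, ascR, Equiv.Perm.mul_apply, Equiv.Perm.mul_apply,
    simpleRefl_apply_castSucc, simpleRefl_apply_succ, ← not_ascR_iff, ascR]

/-- quadratic relation -/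
lemma Lop_quad (q1 q2 : R) (i : Fin m) :
    Lop q1 q2 i ∘ₗ Lop q1 q2 i
      = (q1+q2) • Lop q1 q2 i - (q1*q2) • (LinearMap.id : EE R m →ₗ[R] EE R m) := by
  apply lhom_ext_one
  intro w
  rw [LinearMap.comp_apply, LinearMap.sub_apply, LinearMap.smul_apply, LinearMap.smul_apply,
    LinearMap.id_apply, Lop_single]
  by_cases h : ascL i w
  · rw [if_pos h, Lop_single, if_neg (by rw [ascL_simple_mul]; exact not_not_intro h),
      simple_mul_cancel]
  · rw [if_neg h, map_sub, map_smul, map_smul, Lop_single, Lop_single,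
      if_neg h, if_pos ((ascL_simple_mul i w).2 h), simple_mul_cancel]

lemma mul_simple_inv_apply (j : Fin m) (w : Equiv.Perm (Fin (m+1))) (x : Fin (m+1)) :
    (w * simpleRefl m j)⁻¹ x = simpleRefl m j (w⁻¹ x) := by
  rw [mul_inv_rev, simpleRefl_inv, Equiv.Perm.mul_apply]

lemma key1 {i j : Fin m} {w : Equiv.Perm (Fin (m+1))} (hA : ascL i w) :
    ascL i (w * simpleRefl m j) ↔
      ¬(w⁻¹ i.castSucc = j.castSucc ∧ w⁻¹ i.succ = j.succ) := by
  rw [ascL, mul_simple_inv_apply, mul_simple_inv_apply, simpleRefl]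
  exact swap_lt_swap_iff j hA

lemma key1' {i j : Fin m} {w : Equiv.Perm (Fin (m+1))} (hA : ¬ascL i w) :
    ascL i (w * simpleRefl m j) ↔
      (w⁻¹ i.succ = j.castSucc ∧ w⁻¹ i.castSucc = j.succ) := by
  have hd := (not_ascL_iff i w).1 hA
  rw [ascL, mul_simple_inv_apply, mul_simple_inv_apply, simpleRefl]
  have h2 := swap_lt_swap_iff (a := w⁻¹ i.succ) (b := w⁻¹ i.castSucc) j hd
  have hne : Equiv.swap j.castSucc j.succ (w⁻¹ i.castSucc)
      ≠ Equiv.swap j.castSucc j.succ (w⁻¹ i.succ) := by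
    intro hcq
    exact absurd ((w⁻¹).injective ((Equiv.swap _ _).injective hcq))
      (Fin.castSucc_lt_succ (i := i)).ne
  constructor
  · intro hlt
    by_contra hc
    exact absurd (h2.2 hc) (not_lt.2 hlt.le)
  · intro hc
    rcases lt_trichotomy (Equiv.swap j.castSucc j.succ (w⁻¹ i.castSucc))
      (Equiv.swap j.castSucc j.succ (w⁻¹ i.succ)) with h | h | h
    · exact h
    · exact absurd h hne
    · exact absurd hc (h2.1 h)

lemma key2 {i j : Fin m} {w : Equiv.Perm (Fin (m+1))} (hB : ascR j w) :
    ascR j (simpleRefl m i * w) ↔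
      ¬(w j.castSucc = i.castSucc ∧ w j.succ = i.succ) := by
  rw [ascR, Equiv.Perm.mul_apply, Equiv.Perm.mul_apply, simpleRefl]
  exact swap_lt_swap_iff i hB

lemma key2' {i j : Fin m} {w : Equiv.Perm (Fin (m+1))} (hB : ¬ascR j w) :
    ascR j (simpleRefl m i * w) ↔
      (w j.succ = i.castSucc ∧ w j.castSucc = i.succ) := by
  have hd := (not_ascR_iff j w).1 hB
  rw [ascR, Equiv.Perm.mul_apply, Equiv.Perm.mul_apply, simpleRefl]
  have h2 := swap_lt_swap_iff (a := w j.succ) (b := w j.castSucc) i hd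
  have hne : Equiv.swap i.castSucc i.succ (w j.castSucc)
      ≠ Equiv.swap i.castSucc i.succ (w j.succ) := by
    intro hcq
    exact absurd (w.injective ((Equiv.swap _ _).injective hcq))
      (Fin.castSucc_lt_succ (i := j)).ne
  constructor
  · intro hlt
    by_contra hc
    exact absurd (h2.2 hc) (not_lt.2 hlt.le)
  · intro hc
    rcases lt_trichotomy (Equiv.swap i.castSucc i.succ (w j.castSucc))
      (Equiv.swap i.castSucc i.succ (w j.succ)) with h | h | h
    · exact h
    · exact absurd h hne
    · exact absurd hc (h2.1 h)

lemma conj_eq {i j : Fin m} {w : Equiv.Perm (Fin (m+1))}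
    (h1 : w j.castSucc = i.castSucc) (h2 : w j.succ = i.succ) :
    simpleRefl m i * w = w * simpleRefl m j := by
  have := Equiv.swap_apply_apply w j.castSucc j.succ
  rw [h1, h2] at this
  rw [simpleRefl, simpleRefl, this]
  group

lemma conj_eq' {i j : Fin m} {w : Equiv.Perm (Fin (m+1))}
    (h1 : w j.succ = i.castSucc) (h2 : w j.castSucc = i.succ) :
    simpleRefl m i * w = w * simpleRefl m j := by
  have := Equiv.swap_apply_apply w j.castSucc j.succ
  rw [h1, h2] at this
  rw [simpleRefl, simpleRefl, Equiv.swap_comm, this]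
  group

lemma apply_of_inv_eq {w : Equiv.Perm (Fin (m+1))} {x y : Fin (m+1)}
    (h : w⁻¹ x = y) : w y = x := by rw [← h]; simp

lemma inv_apply_of_eq {w : Equiv.Perm (Fin (m+1))} {x y : Fin (m+1)}
    (h : w x = y) : w⁻¹ y = x := by rw [← h]; simp

/-- the key commutation -/
lemma LR_comm (q1 q2 : R) (i j : Fin m) :
    Lop q1 q2 i ∘ₗ Rop q1 q2 j = Rop q1 q2 j ∘ₗ Lop q1 q2 i := by
  apply lhom_ext_one
  intro w
  rw [LinearMap.comp_apply, LinearMap.comp_apply, Lop_single, Rop_single]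
  by_cases hA : ascL i w <;> by_cases hB : ascR j w
  · -- both ascents
    by_cases hc : w⁻¹ i.castSucc = j.castSucc ∧ w⁻¹ i.succ = j.succ
    · have e1 : w j.castSucc = i.castSucc := apply_of_inv_eq hc.1
      have e2 : w j.succ = i.succ := apply_of_inv_eq hc.2
      have hsw := conj_eq e1 e2
      have ha1 : ¬ascL i (w * simpleRefl m j) := by
        rw [key1 hA]; exact not_not_intro hc
      have ha2 : ¬ascR j (simpleRefl m i * w) := by
        rw [key2 hB]; exact not_not_intro ⟨e1, e2⟩
      rw [if_pos hA, if_pos hB, Lop_single, Rop_single, if_neg ha1, if_neg ha2]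
      have f1 : simpleRefl m i * (w * simpleRefl m j) = w := by
        rw [← hsw, simple_mul_cancel]
      have f2 : simpleRefl m i * w * simpleRefl m j = w := by
        rw [hsw, mul_simple_cancel]
      rw [f1, f2, hsw]
    · rw [if_pos hA, if_pos hB, Lop_single, Rop_single, if_pos ((key1 hA).2 hc),
        if_pos ((key2 hB).2 (by
          rintro ⟨h1', h2'⟩
          exact hc ⟨inv_apply_of_eq h1', inv_apply_of_eq h2'⟩)), mul_assoc]
  · -- hA, ¬hB
    have ha1 : ascL i (w * simpleRefl m j) := by
      rw [key1 hA]
      rintro ⟨h1', h2'⟩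
      rw [ascR, apply_of_inv_eq h1', apply_of_inv_eq h2'] at hB
      exact hB (Fin.castSucc_lt_succ (i := i))
    have ha2 : ¬ascR j (simpleRefl m i * w) := by
      rw [key2' hB]
      rintro ⟨h1', h2'⟩
      have e1 := inv_apply_of_eq h1'
      have e2 := inv_apply_of_eq h2'
      rw [ascL, e1, e2] at hA
      exact absurd hA (not_lt.2 (Fin.castSucc_lt_succ (i := j)).le)
    rw [if_pos hA, if_neg hB, map_sub, map_smul, map_smul, Lop_single, Lop_single,
      Rop_single, if_pos hA, if_pos ha1, if_neg ha2, mul_assoc]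
  · -- ¬hA, hB
    have ha1 : ¬ascL i (w * simpleRefl m j) := by
      rw [key1' hA]
      rintro ⟨h1', h2'⟩
      have e1 := apply_of_inv_eq h1'
      have e2 := apply_of_inv_eq h2'
      rw [ascR, e1, e2] at hB
      exact absurd hB (not_lt.2 (Fin.castSucc_lt_succ (i := i)).le)
    have ha2 : ascR j (simpleRefl m i * w) := by
      rw [key2 hB]
      rintro ⟨h1', h2'⟩
      have e1 := inv_apply_of_eq h1'
      have e2 := inv_apply_of_eq h2'
      rw [ascL, e1, e2] at hA
      exact hA (Fin.castSucc_lt_succ (i := j))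
    rw [if_neg hA, if_pos hB, map_sub, map_smul, map_smul, Lop_single, Rop_single, Rop_single,
      if_neg ha1, if_pos hB, if_pos ha2, mul_assoc]
  · -- both descents
    by_cases hc : w⁻¹ i.succ = j.castSucc ∧ w⁻¹ i.castSucc = j.succ
    · have hsw : simpleRefl m i * w = w * simpleRefl m j :=
        conj_eq' (apply_of_inv_eq hc.2) (apply_of_inv_eq hc.1)
      have ha1 : ascL i (w * simpleRefl m j) := (key1' hA).2 hc
      have ha2 : ascR j (simpleRefl m i * w) := by
        rw [key2' hB]
        exact ⟨apply_of_inv_eq hc.2, apply_of_inv_eq hc.1⟩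
      rw [if_neg hA, if_neg hB, map_sub, map_smul, map_smul, map_sub, map_smul, map_smul,
        Lop_single, Lop_single, Rop_single, Rop_single, if_neg hA, if_neg hB,
        if_pos ha1, if_pos ha2]
      have e1 : simpleRefl m i * (w * simpleRefl m j) = w := by
        rw [← hsw, simple_mul_cancel]
      have e2 : (simpleRefl m i * w) * simpleRefl m j = w := by
        rw [hsw, mul_simple_cancel]
      rw [e1, e2, hsw]
    · have ha1 : ¬ascL i (w * simpleRefl m j) := by
        rw [key1' hA]; exact hc
      have ha2 : ¬ascR j (simpleRefl m i * w) := by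
        rw [key2' hB]
        rintro ⟨h1', h2'⟩
        exact hc ⟨inv_apply_of_eq h2', inv_apply_of_eq h1'⟩
      rw [if_neg hA, if_neg hB, map_sub, map_smul, map_smul, map_sub, map_smul, map_smul,
        Lop_single, Lop_single, Rop_single, Rop_single, if_neg hA, if_neg hB,
        if_neg ha1, if_neg ha2, mul_assoc]
      module

end Ops

section Ops2

variable {R : Type*} [CommRing R]

lemma descent_existsR {w : Equiv.Perm (Fin (m+1))} (hw : w ≠ 1) : ∃ j, ¬ascR j w := by
  obtain ⟨i, hi⟩ := descent_exists (w := w⁻¹) (by simpa using hw)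
  exact ⟨i, fun hc => hi (by rwa [ascL, inv_inv])⟩

lemma eq_zero_of_comm_Rop (q1 q2 : R) (A : EE R m →ₗ[R] EE R m)
    (hcomm : ∀ j, A ∘ₗ Rop q1 q2 j = Rop q1 q2 j ∘ₗ A)
    (h1 : A (Finsupp.single 1 1) = 0) : A = 0 := by
  have key : ∀ w : Equiv.Perm (Fin (m+1)), A (Finsupp.single w 1) = 0 := by
    intro w
    generalize hn : len w = n
    induction n using Nat.strong_induction_on generalizing w with
    | _ n ih =>
      by_cases hw : w = 1
      · subst hw; exact h1
      · obtain ⟨j, hj⟩ := descent_existsR hw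
        have hd := len_mul_desc hj
        have hasc : ascR j (w * simpleRefl m j) := (ascR_mul_simple j w).2 hj
        have hr : Rop q1 q2 j (Finsupp.single (w * simpleRefl m j) (1:R))
            = Finsupp.single w 1 := by
          rw [Rop_single, if_pos hasc, mul_simple_cancel]
        have h0 : A (Finsupp.single (w * simpleRefl m j) 1) = 0 :=
          ih (len (w * simpleRefl m j)) (by omega) _ rfl
        rw [← hr, ← LinearMap.comp_apply, hcomm j, LinearMap.comp_apply, h0, map_zero]
  apply lhom_ext_one
  intro w
  rw [key w, LinearMap.zero_apply]

lemma comp_comm_of {M : Type*} [AddCommMonoid M] [Module R M] {A B C : M →ₗ[R] M}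
    (h1 : A ∘ₗ C = C ∘ₗ A) (h2 : B ∘ₗ C = C ∘ₗ B) :
    (A ∘ₗ B) ∘ₗ C = C ∘ₗ (A ∘ₗ B) := by
  rw [LinearMap.comp_assoc, h2, ← LinearMap.comp_assoc, h1, LinearMap.comp_assoc]

lemma ascL_one (i : Fin m) : ascL i (1 : Equiv.Perm (Fin (m+1))) := by
  rw [ascL]
  simpa using Fin.castSucc_lt_succ (i := i)

lemma Lop_braid (q1 q2 : R) {i j : Fin m} (hj : (j:ℕ) = (i:ℕ)+1) :
    Lop q1 q2 i ∘ₗ Lop q1 q2 j ∘ₗ Lop q1 q2 i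
      = Lop q1 q2 j ∘ₗ Lop q1 q2 i ∘ₗ Lop q1 q2 j := by
  have hi := i.isLt
  have hj' := j.isLt
  have a1 : ascL j (simpleRefl m i) := by
    rw [ascL, simpleRefl_inv, Fin.lt_def]
    simp only [simpleRefl, swap_val, Fin.coe_castSucc, Fin.val_succ]
    split_ifs <;> omega
  have a2 : ascL i (simpleRefl m j * simpleRefl m i) := by
    rw [ascL, mul_inv_rev, simpleRefl_inv, simpleRefl_inv, Fin.lt_def]
    simp only [Equiv.Perm.mul_apply, simpleRefl, swap_val, Fin.coe_castSucc, Fin.val_succ]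
    split_ifs <;> omega
  have a3 : ascL i (simpleRefl m j) := by
    rw [ascL, simpleRefl_inv, Fin.lt_def]
    simp only [simpleRefl, swap_val, Fin.coe_castSucc, Fin.val_succ]
    split_ifs <;> omega
  have a4 : ascL j (simpleRefl m i * simpleRefl m j) := by
    rw [ascL, mul_inv_rev, simpleRefl_inv, simpleRefl_inv, Fin.lt_def]
    simp only [Equiv.Perm.mul_apply, simpleRefl, swap_val, Fin.coe_castSucc, Fin.val_succ]
    split_ifs <;> omega
  have hsub : Lop q1 q2 i ∘ₗ Lop q1 q2 j ∘ₗ Lop q1 q2 i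
      - Lop q1 q2 j ∘ₗ Lop q1 q2 i ∘ₗ Lop q1 q2 j = 0 := by
    apply eq_zero_of_comm_Rop q1 q2
    · intro k
      rw [LinearMap.sub_comp, LinearMap.comp_sub]
      congr 1
      · exact comp_comm_of (LR_comm q1 q2 i k) (comp_comm_of (LR_comm q1 q2 j k)
          (LR_comm q1 q2 i k))
      · exact comp_comm_of (LR_comm q1 q2 j k) (comp_comm_of (LR_comm q1 q2 i k)
          (LR_comm q1 q2 j k))
    · rw [LinearMap.sub_apply, LinearMap.comp_apply, LinearMap.comp_apply,
        LinearMap.comp_apply, LinearMap.comp_apply,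
        Lop_single, if_pos (ascL_one i), mul_one, Lop_single, if_pos a1,
        Lop_single, if_pos a2,
        Lop_single, if_pos (ascL_one j), mul_one, Lop_single, if_pos a3,
        Lop_single, if_pos a4, ← mul_assoc, ← mul_assoc, braid_perm hj, sub_self]
  exact eq_of_sub_eq_zero hsub

lemma Lop_far (q1 q2 : R) {i j : Fin m} (h : (i:ℕ)+1 < (j:ℕ)) :
    Lop q1 q2 i ∘ₗ Lop q1 q2 j = Lop q1 q2 j ∘ₗ Lop q1 q2 i := by
  have hi := i.isLt
  have hj' := j.isLt
  have a1 : ascL i (simpleRefl m j) := by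
    rw [ascL, simpleRefl_inv, Fin.lt_def]
    simp only [simpleRefl, swap_val, Fin.coe_castSucc, Fin.val_succ]
    split_ifs <;> omega
  have a2 : ascL j (simpleRefl m i) := by
    rw [ascL, simpleRefl_inv, Fin.lt_def]
    simp only [simpleRefl, swap_val, Fin.coe_castSucc, Fin.val_succ]
    split_ifs <;> omega
  have hsub : Lop q1 q2 i ∘ₗ Lop q1 q2 j - Lop q1 q2 j ∘ₗ Lop q1 q2 i = 0 := by
    apply eq_zero_of_comm_Rop q1 q2
    · intro k
      rw [LinearMap.sub_comp, LinearMap.comp_sub]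
      congr 1
      · exact comp_comm_of (LR_comm q1 q2 i k) (LR_comm q1 q2 j k)
      · exact comp_comm_of (LR_comm q1 q2 j k) (LR_comm q1 q2 i k)
    · rw [LinearMap.sub_apply, LinearMap.comp_apply, LinearMap.comp_apply,
        Lop_single, if_pos (ascL_one j), mul_one, Lop_single, if_pos a1,
        Lop_single, if_pos (ascL_one i), mul_one, Lop_single, if_pos a2,
        comm_perm h, sub_self]
  exact eq_of_sub_eq_zero hsub

end Ops2

section Words2

lemma adj_desc1' {i j : Fin m} (hj : (j:ℕ) = (i:ℕ)+1) {w : Equiv.Perm (Fin (m+1))}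
    (h1 : ¬ascL i w) (h2 : ¬ascL j w) : ¬ascL i (simpleRefl m j * w) := by
  rw [not_ascL_iff] at h1 h2 ⊢
  rw [inv_simple_mul_apply, inv_simple_mul_apply,
    simpleRefl_apply_of_ne (i := j) (x := i.castSucc) (by simp; omega) (by simp; omega),
    ← castSucc_eq_succ hj, simpleRefl_apply_castSucc]
  rw [castSucc_eq_succ hj] at h2
  exact h2.trans h1

lemma adj_desc2' {i j : Fin m} (hj : (j:ℕ) = (i:ℕ)+1) {w : Equiv.Perm (Fin (m+1))}
    (h1 : ¬ascL i w) (h2 : ¬ascL j w) :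
    ¬ascL j (simpleRefl m i * (simpleRefl m j * w)) := by
  rw [not_ascL_iff] at h1 h2 ⊢
  simp only [inv_simple_mul_apply]
  rw [castSucc_eq_succ hj, simpleRefl_apply_succ,
    simpleRefl_apply_of_ne (i := j) (x := i.castSucc) (by simp; omega) (by simp; omega),
    simpleRefl_apply_of_ne (i := i) (x := j.succ) (by simp; omega) (by simp; omega),
    simpleRefl_apply_succ, castSucc_eq_succ hj]
  exact h1

lemma far_words {i j : Fin m} (h : (i:ℕ)+1 < (j:ℕ)) {w : Equiv.Perm (Fin (m+1))}
    (hdi : ¬ascL i w) (hdj : ¬ascL j w) :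
    ∃ r : List (Fin m), Red (j :: r) ∧ wp (j :: r) = simpleRefl m i * w ∧
      Red (i :: r) ∧ wp (i :: r) = simpleRefl m j * w := by
  obtain ⟨r, hr, hwpr⟩ := exists_red (simpleRefl m j * (simpleRefl m i * w))
  have hu : simpleRefl m j * (simpleRefl m i * w) = simpleRefl m i * (simpleRefl m j * w) := by
    rw [← mul_assoc, ← mul_assoc, comm_perm h]
  have haj : ascL j (wp r) := by
    rw [hwpr, ascL_simple_mul]
    rw [ascL_simple_mul_of_far (Or.inl h)]
    exact hdj
  have hai : ascL i (wp r) := by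
    rw [hwpr, hu, ascL_simple_mul]
    rw [ascL_simple_mul_of_far (Or.inr h)]
    exact hdi
  refine ⟨r, (red_cons_iff j r).2 ⟨haj, hr⟩, ?_, (red_cons_iff i r).2 ⟨hai, hr⟩, ?_⟩
  · rw [wp_cons, hwpr, simple_mul_cancel]
  · rw [wp_cons, hwpr, hu, simple_mul_cancel]

lemma adj_words {i j : Fin m} (hj : (j:ℕ) = (i:ℕ)+1) {w : Equiv.Perm (Fin (m+1))}
    (hdi : ¬ascL i w) (hdj : ¬ascL j w) :
    ∃ r : List (Fin m), Red (j :: i :: r) ∧ wp (j :: i :: r) = simpleRefl m i * w ∧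
      Red (i :: j :: r) ∧ wp (i :: j :: r) = simpleRefl m j * w := by
  obtain ⟨r, hr, hwpr⟩ :=
    exists_red (simpleRefl m i * (simpleRefl m j * (simpleRefl m i * w)))
  have hbraid : simpleRefl m i * (simpleRefl m j * (simpleRefl m i * w))
      = simpleRefl m j * (simpleRefl m i * (simpleRefl m j * w)) := by
    rw [← mul_assoc, ← mul_assoc, ← mul_assoc, ← mul_assoc, braid_perm hj]
  have hai : ascL i (wp r) := by
    rw [hwpr, ascL_simple_mul]
    exact adj_desc2 hj hdi hdj
  have hred_i : Red (i :: r) := (red_cons_iff i r).2 ⟨hai, hr⟩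
  have hwp_i : wp (i :: r) = simpleRefl m j * (simpleRefl m i * w) := by
    rw [wp_cons, hwpr, simple_mul_cancel]
  have haj2 : ascL j (wp (i :: r)) := by
    rw [hwp_i, ascL_simple_mul]
    exact adj_desc1 hj hdi hdj
  have hred_ji : Red (j :: i :: r) := (red_cons_iff j _).2 ⟨haj2, hred_i⟩
  have hwp_ji : wp (j :: i :: r) = simpleRefl m i * w := by
    rw [wp_cons, hwp_i, simple_mul_cancel]
  have haj : ascL j (wp r) := by
    rw [hwpr, hbraid, ascL_simple_mul]
    exact adj_desc2' hj hdi hdj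
  have hred_j : Red (j :: r) := (red_cons_iff j r).2 ⟨haj, hr⟩
  have hwp_j : wp (j :: r) = simpleRefl m i * (simpleRefl m j * w) := by
    rw [wp_cons, hwpr, hbraid, simple_mul_cancel]
  have hai2 : ascL i (wp (j :: r)) := by
    rw [hwp_j, ascL_simple_mul]
    exact adj_desc1' hj hdi hdj
  have hred_ij : Red (i :: j :: r) := (red_cons_iff i _).2 ⟨hai2, hred_j⟩
  have hwp_ij : wp (i :: j :: r) = simpleRefl m j * w := by
    rw [wp_cons, hwp_j, simple_mul_cancel]
  exact ⟨r, hred_ji, hwp_ji, hred_ij, hwp_ij⟩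

end Words2

section Alg

variable {R : Type*} [CommRing R]

lemma heckeT_comm (q1 q2 : R) {i j : Fin m} (h : (i:ℕ)+1 < (j:ℕ)) :
    heckeT R q1 q2 m i * heckeT R q1 q2 m j = heckeT R q1 q2 m j * heckeT R q1 q2 m i := by
  rw [heckeT, heckeT, ← map_mul, ← map_mul]
  exact RingQuot.mkAlgHom_rel R (HeckeRel.comm i j h)

lemma heckeT_braid (q1 q2 : R) {i j : Fin m} (h : (j:ℕ) = (i:ℕ)+1) :
    heckeT R q1 q2 m i * heckeT R q1 q2 m j * heckeT R q1 q2 m i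
      = heckeT R q1 q2 m j * heckeT R q1 q2 m i * heckeT R q1 q2 m j := by
  rw [heckeT, heckeT, ← map_mul, ← map_mul, ← map_mul, ← map_mul]
  exact RingQuot.mkAlgHom_rel R (HeckeRel.braid i j h)

lemma heckeT_mul_self (q1 q2 : R) (i : Fin m) :
    heckeT R q1 q2 m i * heckeT R q1 q2 m i
      = (q1+q2) • heckeT R q1 q2 m i - (q1*q2) • 1 := by
  have h0 := RingQuot.mkAlgHom_rel R (HeckeRel.quad (R := R) (q1 := q1) (q2 := q2) (m := m) i)
  rw [map_mul, map_sub, map_sub, map_zero, AlgHom.commutes, AlgHom.commutes] at h0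
  set T := heckeT R q1 q2 m i with hT
  rw [← heckeT, ← hT] at h0
  rw [Algebra.algebraMap_eq_smul_one, Algebra.algebraMap_eq_smul_one] at h0
  have hexp : (T - q1 • 1) * (T - q2 • 1) = T * T - (q1+q2) • T + (q1*q2) • 1 := by
    rw [sub_mul, mul_sub, mul_sub]
    simp only [mul_smul_comm, smul_mul_assoc, mul_one, one_mul, smul_smul]
    module
  rw [hexp] at h0
  have key : T * T - ((q1+q2) • T - (q1*q2) • 1) = T * T - (q1+q2) • T + (q1*q2) • 1 := by
    module
  exact eq_of_sub_eq_zero (key.trans h0)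

lemma heckeT_sq_mul (q1 q2 : R) (i : Fin m) (x : HeckeAlgebra R q1 q2 m) :
    heckeT R q1 q2 m i * (heckeT R q1 q2 m i * x)
      = (q1+q2) • (heckeT R q1 q2 m i * x) - (q1*q2) • x := by
  rw [← mul_assoc, heckeT_mul_self, sub_mul, smul_mul_assoc, smul_mul_assoc, one_mul]

/-- the representation -/
noncomputable def thetaF (q1 q2 : R) : FreeAlgebra R (Fin m) →ₐ[R] Module.End R (EE R m) :=
  FreeAlgebra.lift R (fun i => (Lop q1 q2 i : EE R m →ₗ[R] EE R m))

lemma thetaF_rel (q1 q2 : R) : ∀ ⦃x y⦄, HeckeRel R q1 q2 m x y →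
    thetaF q1 q2 x = thetaF q1 q2 y := by
  intro x y h
  induction h with
  | comm i j hij =>
    rw [map_mul, map_mul, thetaF, FreeAlgebra.lift_ι_apply, FreeAlgebra.lift_ι_apply,
      Module.End.mul_eq_comp, Module.End.mul_eq_comp]
    exact Lop_far q1 q2 hij
  | braid i j hij =>
    rw [map_mul, map_mul, map_mul, map_mul, thetaF, FreeAlgebra.lift_ι_apply,
      FreeAlgebra.lift_ι_apply, mul_assoc, mul_assoc, Module.End.mul_eq_comp,
      Module.End.mul_eq_comp, Module.End.mul_eq_comp, Module.End.mul_eq_comp]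
    exact Lop_braid q1 q2 hij
  | quad i =>
    rw [map_mul, map_sub, map_sub, map_zero, AlgHom.commutes, AlgHom.commutes, thetaF,
      FreeAlgebra.lift_ι_apply, Algebra.algebraMap_eq_smul_one, Algebra.algebraMap_eq_smul_one]
    apply LinearMap.ext
    intro v
    have hq := LinearMap.ext_iff.1 (Lop_quad q1 q2 i) v
    simp only [LinearMap.comp_apply, LinearMap.sub_apply, LinearMap.smul_apply,
      LinearMap.id_apply] at hq
    simp only [Module.End.mul_apply, LinearMap.sub_apply, LinearMap.smul_apply,
      Module.End.one_apply, LinearMap.zero_apply, map_sub, map_smul, hq]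
    module

noncomputable def theta (q1 q2 : R) :
    HeckeAlgebra R q1 q2 m →ₐ[R] Module.End R (EE R m) :=
  RingQuot.liftAlgHom R ⟨thetaF q1 q2, thetaF_rel q1 q2⟩

lemma theta_heckeT (q1 q2 : R) (i : Fin m) :
    theta q1 q2 (heckeT R q1 q2 m i) = Lop q1 q2 i := by
  rw [heckeT, theta, RingQuot.liftAlgHom_mkAlgHom_apply, thetaF, FreeAlgebra.lift_ι_apply]

/-- product of Hecke generators along a word -/
noncomputable def prodH (q1 q2 : R) (l : List (Fin m)) : HeckeAlgebra R q1 q2 m :=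
  (l.map (heckeT R q1 q2 m)).prod

@[simp] lemma prodH_nil (q1 q2 : R) : prodH (m := m) q1 q2 [] = 1 := rfl

lemma prodH_cons (q1 q2 : R) (i : Fin m) (l : List (Fin m)) :
    prodH q1 q2 (i :: l) = heckeT R q1 q2 m i * prodH q1 q2 l := by
  simp [prodH]

lemma theta_prodH_red (q1 q2 : R) {l : List (Fin m)} (hl : Red l) :
    theta q1 q2 (prodH q1 q2 l) (Finsupp.single 1 1) = Finsupp.single (wp l) (1:R) := by
  induction l with
  | nil => simp [prodH, wp]
  | cons i l ih =>
    obtain ⟨ha, hr⟩ := (red_cons_iff i l).1 hl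
    rw [prodH_cons, map_mul, Module.End.mul_apply, ih hr, theta_heckeT, Lop_single,
      if_pos ha, wp_cons]

end Alg

section Matsumoto

variable {R : Type*} [CommRing R]

lemma matsumoto (q1 q2 : R) :
    ∀ n : ℕ, ∀ l1 l2 : List (Fin m), l1.length = n → Red l1 → Red l2 → wp l1 = wp l2 →
      prodH (m := m) q1 q2 l1 = prodH q1 q2 l2 := by
  intro n
  induction n using Nat.strong_induction_on with
  | _ n ih =>
    intro l1 l2 hn h1 h2 hw
    cases l1 with
    | nil =>
      have hw2 : wp l2 = 1 := by rw [← hw, wp_nil]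
      have hl2 : l2.length = 0 := by rw [Red, hw2, len_one] at h2; omega
      rw [List.length_eq_zero_iff] at hl2
      subst hl2; rfl
    | cons i l1' =>
      cases l2 with
      | nil =>
        have hw1 : wp (i :: l1') = 1 := by rw [hw, wp_nil]
        rw [Red, hw1, len_one] at h1
        simp at h1
      | cons j l2' =>
        obtain ⟨ha1, hr1⟩ := (red_cons_iff i l1').1 h1
        obtain ⟨ha2, hr2⟩ := (red_cons_iff j l2').1 h2
        set w := wp (i :: l1') with hwdef
        have hwl1 : wp l1' = simpleRefl m i * w := by
          rw [hwdef, wp_cons, simple_mul_cancel]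
        have hwl2 : wp l2' = simpleRefl m j * w := by
          rw [hw, wp_cons, simple_mul_cancel]
        have hdi : ¬ascL i w := (ascL_simple_mul i w).1 (hwl1 ▸ ha1)
        have hdj : ¬ascL j w := (ascL_simple_mul j w).1 (hwl2 ▸ ha2)
        have hlen1 : l1'.length + 1 = n := by simpa using hn
        have hlen2 : l2'.length = l1'.length := by
          have e1 : len (wp l1') = l1'.length := hr1
          have e2 : len (wp l2') = l2'.length := hr2
          have d1 := len_simple_mul_desc hdi
          have d2 := len_simple_mul_desc hdj
          rw [hwl1] at e1; rw [hwl2] at e2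
          omega
        rcases Nat.lt_trichotomy (i:ℕ) (j:ℕ) with hij | hij | hij
        · rcases Nat.lt_or_ge ((i:ℕ)+1) (j:ℕ) with hfar | hadj
          · obtain ⟨r, hrj, hwpj, hri, hwpi⟩ := far_words hfar hdi hdj
            have e1 : prodH q1 q2 l1' = prodH q1 q2 (j :: r) :=
              ih l1'.length (by omega) l1' (j :: r) rfl hr1 hrj (by rw [hwl1, hwpj])
            have e2 : prodH q1 q2 l2' = prodH q1 q2 (i :: r) :=
              ih l2'.length (by omega) l2' (i :: r) rfl hr2 hri (by rw [hwl2, hwpi])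
            rw [prodH_cons, prodH_cons, e1, e2, prodH_cons, prodH_cons, ← mul_assoc,
              ← mul_assoc, heckeT_comm q1 q2 hfar]
          · have hadj' : (j:ℕ) = (i:ℕ)+1 := by omega
            obtain ⟨r, hrji, hwpji, hrij, hwpij⟩ := adj_words hadj' hdi hdj
            have e1 : prodH q1 q2 l1' = prodH q1 q2 (j :: i :: r) :=
              ih l1'.length (by omega) l1' (j :: i :: r) rfl hr1 hrji (by rw [hwl1, hwpji])
            have e2 : prodH q1 q2 l2' = prodH q1 q2 (i :: j :: r) :=
              ih l2'.length (by omega) l2' (i :: j :: r) rfl hr2 hrij (by rw [hwl2, hwpij])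
            rw [prodH_cons, prodH_cons, e1, e2, prodH_cons, prodH_cons, prodH_cons,
              prodH_cons, ← mul_assoc, ← mul_assoc, ← mul_assoc, ← mul_assoc,
              heckeT_braid q1 q2 hadj']
        · have hij' : i = j := Fin.val_injective hij
          subst hij'
          rw [prodH_cons, prodH_cons,
            ih l1'.length (by omega) l1' l2' rfl hr1 hr2 (by rw [hwl1, hwl2])]
        · rcases Nat.lt_or_ge ((j:ℕ)+1) (i:ℕ) with hfar | hadj
          · obtain ⟨r, hri, hwpi, hrj, hwpj⟩ := far_words hfar hdj hdi
            have e1 : prodH q1 q2 l1' = prodH q1 q2 (j :: r) :=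
              ih l1'.length (by omega) l1' (j :: r) rfl hr1 hrj (by rw [hwl1, hwpj])
            have e2 : prodH q1 q2 l2' = prodH q1 q2 (i :: r) :=
              ih l2'.length (by omega) l2' (i :: r) rfl hr2 hri (by rw [hwl2, hwpi])
            rw [prodH_cons, prodH_cons, e1, e2, prodH_cons, prodH_cons, ← mul_assoc,
              ← mul_assoc, heckeT_comm q1 q2 hfar]
          · have hadj' : (i:ℕ) = (j:ℕ)+1 := by omega
            obtain ⟨r, hrij, hwpij, hrji, hwpji⟩ := adj_words hadj' hdj hdi
            have e1 : prodH q1 q2 l1' = prodH q1 q2 (j :: i :: r) :=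
              ih l1'.length (by omega) l1' (j :: i :: r) rfl hr1 hrji (by rw [hwl1, hwpji])
            have e2 : prodH q1 q2 l2' = prodH q1 q2 (i :: j :: r) :=
              ih l2'.length (by omega) l2' (i :: j :: r) rfl hr2 hrij (by rw [hwl2, hwpij])
            rw [prodH_cons, prodH_cons, e1, e2, prodH_cons, prodH_cons, prodH_cons,
              prodH_cons, ← mul_assoc, ← mul_assoc, ← mul_assoc, ← mul_assoc,
              heckeT_braid q1 q2 hadj']

end Matsumoto

section Final

variable {R : Type*} [CommRing R]

/-- a chosen reduced word for each permutation -/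
noncomputable def rword (w : Equiv.Perm (Fin (m+1))) : List (Fin m) :=
  (exists_red w).choose

lemma rword_red (w : Equiv.Perm (Fin (m+1))) : Red (rword (m := m) w) :=
  (exists_red w).choose_spec.1

lemma rword_wp (w : Equiv.Perm (Fin (m+1))) : wp (rword (m := m) w) = w :=
  (exists_red w).choose_spec.2

/-- the standard basis element `T_w` -/
noncomputable def psi (q1 q2 : R) (w : Equiv.Perm (Fin (m+1))) : HeckeAlgebra R q1 q2 m :=
  prodH q1 q2 (rword w)

lemma psi_eq_prodH (q1 q2 : R) {l : List (Fin m)} (hl : Red l) :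
    psi q1 q2 (wp l) = prodH q1 q2 l :=
  matsumoto q1 q2 (rword (wp l)).length _ l rfl (rword_red _) hl (by rw [rword_wp])

lemma psi_one (q1 q2 : R) : psi (m := m) q1 q2 1 = 1 := by
  have h := psi_eq_prodH (m := m) q1 q2 (l := []) red_nil
  rw [wp_nil] at h
  rw [h, prodH_nil]

lemma theta_psi (q1 q2 : R) (w : Equiv.Perm (Fin (m+1))) :
    theta q1 q2 (psi q1 q2 w) (Finsupp.single 1 1) = Finsupp.single w (1:R) := by
  rw [psi, theta_prodH_red q1 q2 (rword_red w), rword_wp]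

lemma heckeT_mul_psi_mem (q1 q2 : R) (i : Fin m) (w : Equiv.Perm (Fin (m+1))) :
    heckeT R q1 q2 m i * psi q1 q2 w
      ∈ Submodule.span R (Set.range (psi (m := m) q1 q2)) := by
  by_cases h : ascL i w
  · have hred : Red (i :: rword w) :=
      (red_cons_iff _ _).2 ⟨by rw [rword_wp]; exact h, rword_red w⟩
    have hp : psi q1 q2 (wp (i :: rword w)) = prodH q1 q2 (i :: rword w) :=
      psi_eq_prodH q1 q2 hred
    rw [prodH_cons] at hp
    have : heckeT R q1 q2 m i * psi q1 q2 w = psi q1 q2 (wp (i :: rword w)) := by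
      rw [hp]; rfl
    rw [this]
    exact Submodule.subset_span ⟨_, rfl⟩
  · set w' := simpleRefl m i * w with hw'
    have h2 : ascL i w' := (ascL_simple_mul i w).2 h
    have hred : Red (i :: rword w') :=
      (red_cons_iff _ _).2 ⟨by rw [rword_wp]; exact h2, rword_red w'⟩
    have hpsi : psi q1 q2 w = heckeT R q1 q2 m i * psi q1 q2 w' := by
      have hp := psi_eq_prodH q1 q2 hred
      rw [wp_cons, rword_wp, hw', simple_mul_cancel, prodH_cons] at hp
      exact hp
    rw [hpsi, heckeT_sq_mul, ← hpsi]
    apply Submodule.sub_mem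
    · exact Submodule.smul_mem _ _ (Submodule.subset_span ⟨w, rfl⟩)
    · exact Submodule.smul_mem _ _ (Submodule.subset_span ⟨w', rfl⟩)

lemma heckeT_mul_mem_span (q1 q2 : R) (i : Fin m) {x : HeckeAlgebra R q1 q2 m}
    (hx : x ∈ Submodule.span R (Set.range (psi (m := m) q1 q2))) :
    heckeT R q1 q2 m i * x ∈ Submodule.span R (Set.range (psi (m := m) q1 q2)) := by
  induction hx using Submodule.span_induction with
  | mem x hx => obtain ⟨w, rfl⟩ := hx; exact heckeT_mul_psi_mem q1 q2 i w
  | zero => rw [mul_zero]; exact Submodule.zero_mem _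
  | add x y _ _ hx hy => rw [mul_add]; exact Submodule.add_mem _ hx hy
  | smul c x _ hx => rw [mul_smul_comm]; exact Submodule.smul_mem _ _ hx

lemma span_psi_top (q1 q2 : R) :
    Submodule.span R (Set.range (psi (m := m) q1 q2)) = ⊤ := by
  rw [Submodule.eq_top_iff']
  intro z
  obtain ⟨x, rfl⟩ := RingQuot.mkAlgHom_surjective R (HeckeRel R q1 q2 m) z
  have hone : (1 : HeckeAlgebra R q1 q2 m)
      ∈ Submodule.span R (Set.range (psi (m := m) q1 q2)) := by
    rw [← psi_one q1 q2]
    exact Submodule.subset_span ⟨1, rfl⟩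
  have main : ∀ x : FreeAlgebra R (Fin m), ∀ y : HeckeAlgebra R q1 q2 m,
      y ∈ Submodule.span R (Set.range (psi (m := m) q1 q2)) →
      RingQuot.mkAlgHom R (HeckeRel R q1 q2 m) x * y
        ∈ Submodule.span R (Set.range (psi (m := m) q1 q2)) := by
    intro x
    induction x using FreeAlgebra.induction with
    | grade0 r =>
      intro y hy
      rw [AlgHom.commutes, ← Algebra.smul_def]
      exact Submodule.smul_mem _ _ hy
    | grade1 i =>
      intro y hy
      exact heckeT_mul_mem_span q1 q2 i hy
    | mul a b ha hb =>
      intro y hy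
      rw [map_mul, mul_assoc]
      exact ha _ (hb _ hy)
    | add a b ha hb =>
      intro y hy
      rw [map_add, add_mul]
      exact Submodule.add_mem _ (ha _ hy) (hb _ hy)
  have := main x 1 hone
  rwa [mul_one] at this

/-- evaluation at the identity basis vector, as a linear map -/
noncomputable def PhiL (q1 q2 : R) : HeckeAlgebra R q1 q2 m →ₗ[R] EE R m where
  toFun x := theta q1 q2 x (Finsupp.single 1 1)
  map_add' x y := by
    show theta q1 q2 (x + y) (Finsupp.single 1 1) = _
    rw [map_add]; rfl
  map_smul' c x := by
    show theta q1 q2 (c • x) (Finsupp.single 1 1) = _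
    rw [map_smul]; rfl

lemma psi_linearIndependent (q1 q2 : R) :
    LinearIndependent R (psi (m := m) q1 q2) := by
  have h1 : LinearIndependent R (fun w : Equiv.Perm (Fin (m+1)) => Finsupp.single w (1:R)) := by
    have := (Finsupp.basisSingleOne (R := R) (ι := Equiv.Perm (Fin (m+1)))).linearIndependent
    rwa [Finsupp.coe_basisSingleOne] at this
  have h2 : (⇑(PhiL (m := m) q1 q2) ∘ psi q1 q2)
      = fun w : Equiv.Perm (Fin (m+1)) => Finsupp.single w (1:R) :=
    funext fun w => theta_psi q1 q2 w
  exact LinearIndependent.of_comp (PhiL q1 q2) (h2 ▸ h1)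

end Final

end HeckeProof

/-- `H_n(q1,q2)` is a free `R`-module of rank `n!`, with basis `{T_w : w ∈ S_n}`,
where `T_w` is the product of the generators along any reduced word for `w`. -/
theorem exists_basis_hecke {R : Type*} [CommRing R] [IsDomain R] (q1 q2 : Rˣ) (m : ℕ) :
    ∃ B : Module.Basis (Equiv.Perm (Fin (m + 1))) R (HeckeAlgebra R (q1 : R) (q2 : R) m),
      ∀ (w : Equiv.Perm (Fin (m + 1))) (l : List (Fin m)),
        IsReducedWord m w l → B w = (l.map (heckeT R (q1 : R) (q2 : R) m)).prod := by
  refine ⟨Module.Basis.mk (HeckeProof.psi_linearIndependent (q1:R) (q2:R))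
    (le_of_eq (HeckeProof.span_psi_top (q1:R) (q2:R)).symm), ?_⟩
  intro w l hl
  rw [Module.Basis.mk_apply]
  obtain ⟨hpl, hred⟩ := (HeckeProof.isReducedWord_iff w l).1 hl
  rw [← hpl, HeckeProof.psi_eq_prodH _ _ hred]
  rfl
end

section
/- For a partition λ of n with k parts, any normalized Markov trace tr on the tower of Hecke algebras satisfies tr(T_{b_λ}) = ((1+q_1q_2)/(q_1+q_2))^{k-1} · tr(id_1), where b_λ is the braid that is the disjoint (side-by-side) product of the braids σ_{λ_i - 1}···σ_2σ_1. -/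
open FreeAlgebra Equiv

section Aux

variable {R : Type*} [CommRing R] (q1 q2 : R)

/-- Product of Hecke generators along a word of indices (out-of-range letters give `1`). -/
noncomputable def wprod (m : ℕ) (W : List ℕ) : HeckeAlgebra R q1 q2 m :=
  (W.map (fun x => if h : x < m then heckeT R q1 q2 m ⟨x, h⟩ else 1)).prod

lemma wprod_nil (m : ℕ) : wprod q1 q2 m [] = 1 := rfl

lemma wprod_cons (m x : ℕ) (W : List ℕ) :
    wprod q1 q2 m (x :: W) =
      (if h : x < m then heckeT R q1 q2 m ⟨x, h⟩ else 1) * wprod q1 q2 m W := by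
  simp [wprod]

lemma wprod_append (m : ℕ) (W1 W2 : List ℕ) :
    wprod q1 q2 m (W1 ++ W2) = wprod q1 q2 m W1 * wprod q1 q2 m W2 := by
  simp [wprod]

lemma wprod_eq_pmap (m : ℕ) (W : List ℕ) (h : ∀ x ∈ W, x < m) :
    (W.pmap (fun x hx => heckeT R q1 q2 m ⟨x, hx⟩) h).prod = wprod q1 q2 m W := by
  induction W with
  | nil => rfl
  | cons x W ih =>
      rw [List.pmap, List.prod_cons, wprod_cons,
        dif_pos (h x List.mem_cons_self), ih]

lemma heckeT_quad (m : ℕ) (i : Fin m) :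
    heckeT R q1 q2 m i * heckeT R q1 q2 m i =
      algebraMap R _ (q1 + q2) * heckeT R q1 q2 m i -
        algebraMap R _ (q1 * q2) := by
  have h := RingQuot.mkAlgHom_rel R (HeckeRel.quad (R := R) (q1 := q1) (q2 := q2) i)
  simp only [map_mul, map_sub, map_zero, AlgHom.commutes] at h
  set T := heckeT R q1 q2 m i with hT
  rw [show RingQuot.mkAlgHom R (HeckeRel R q1 q2 m) (ι R i) = T from rfl] at h
  have hc : T * algebraMap R (HeckeAlgebra R q1 q2 m) q2
      = algebraMap R (HeckeAlgebra R q1 q2 m) q2 * T := (Algebra.commutes _ _).symm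
  rw [sub_mul, mul_sub, mul_sub, hc, sub_sub, sub_eq_zero] at h
  rw [h, map_add, map_mul, add_mul]
  abel

/-- The standard inclusion `H_k → H_{k+1}`. -/
noncomputable def incl (k : ℕ) :
    HeckeAlgebra R q1 q2 k →ₐ[R] HeckeAlgebra R q1 q2 (k + 1) :=
  RingQuot.liftAlgHom R (s := HeckeRel R q1 q2 k)
    ⟨FreeAlgebra.lift R (fun i => heckeT R q1 q2 (k + 1) i.castSucc), by
      intro x y h
      induction h with
      | comm i j hij =>
          have := RingQuot.mkAlgHom_rel R
            (HeckeRel.comm (R := R) (q1 := q1) (q2 := q2) i.castSucc j.castSucc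
              (by simpa using hij))
          simpa [heckeT, map_mul] using this
      | braid i j hij =>
          have := RingQuot.mkAlgHom_rel R
            (HeckeRel.braid (R := R) (q1 := q1) (q2 := q2) i.castSucc j.castSucc
              (by simpa using hij))
          simpa [heckeT, map_mul] using this
      | quad i =>
          have := RingQuot.mkAlgHom_rel R
            (HeckeRel.quad (R := R) (q1 := q1) (q2 := q2) i.castSucc)
          simpa [heckeT, map_mul, map_sub, map_zero, AlgHom.commutes] using this⟩

lemma incl_gen (k : ℕ) (i : Fin k) :
    incl q1 q2 k (heckeT R q1 q2 k i) = heckeT R q1 q2 (k + 1) i.castSucc := by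
  simp [incl, heckeT, RingQuot.liftAlgHom_mkAlgHom_apply]

lemma incl_wprod (k : ℕ) (W : List ℕ) (h : ∀ x ∈ W, x < k) :
    incl q1 q2 k (wprod q1 q2 k W) = wprod q1 q2 (k + 1) W := by
  induction W with
  | nil => simp [wprod_nil]
  | cons x W ih =>
      have hx := h x List.mem_cons_self
      rw [wprod_cons, wprod_cons, map_mul, dif_pos hx,
        dif_pos (Nat.lt_succ_of_lt hx), incl_gen,
        ih (fun y hy => h y (List.mem_cons_of_mem _ hy))]
      rfl

end Aux

lemma blockWord_append (l1 l2 : List ℕ) :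
    blockWord (l1 ++ l2) = blockWord l1 ++ (blockWord l2).map (· + l1.sum) := by
  induction l1 with
  | nil => simp [blockWord]
  | cons a l1 ih =>
      rw [List.cons_append,
        show blockWord (a :: (l1 ++ l2)) =
          (List.range (a - 1)).reverse ++ (blockWord (l1 ++ l2)).map (· + a) from rfl,
        ih, List.map_append, List.map_map]
      simp only [blockWord, List.sum_cons, List.append_assoc]
      congr 2
      apply List.map_congr_left
      intro x _
      simp only [Function.comp_apply]
      omega

lemma blockWord_lt (l : List ℕ) : ∀ x ∈ blockWord l, x + 1 < l.sum := by
  induction l with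
  | nil => simp [blockWord]
  | cons a l ih =>
      intro x hx
      simp only [blockWord, List.mem_append, List.mem_reverse, List.mem_range,
        List.mem_map] at hx
      simp only [List.sum_cons]
      rcases hx with h | ⟨y, hy, rfl⟩
      · omega
      · have := ih y hy; omega

section Trace

variable {R : Type*} [CommRing R] (q1 q2 : Rˣ) (u : Rˣ)
  (hu : (u : R) = (q1 : R) + (q2 : R))
  (tr : ∀ k : ℕ, HeckeAlgebra R (q1 : R) (q2 : R) k →ₗ[R] R)
  (t : ∀ (k : ℕ) (i : Fin k), (HeckeAlgebra R (q1 : R) (q2 : R) k)ˣ)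
  (ht : ∀ (k : ℕ) (i : Fin k),
    ((t k i : (HeckeAlgebra R (q1 : R) (q2 : R) k)ˣ) : HeckeAlgebra R (q1 : R) (q2 : R) k) =
      heckeT R (q1 : R) (q2 : R) k i)
  (hcomm : ∀ (k : ℕ) (a b : HeckeAlgebra R (q1 : R) (q2 : R) k),
    tr k (a * b) = tr k (b * a))
  (hmarkov : ∀ (k : ℕ)
    (ι : HeckeAlgebra R (q1 : R) (q2 : R) k →ₐ[R] HeckeAlgebra R (q1 : R) (q2 : R) (k + 1)),
    (∀ i : Fin k, ι (heckeT R (q1 : R) (q2 : R) k i) =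
      heckeT R (q1 : R) (q2 : R) (k + 1) i.castSucc) →
    ∀ b : HeckeAlgebra R (q1 : R) (q2 : R) k,
      tr k b = tr (k + 1) (heckeT R (q1 : R) (q2 : R) (k + 1) (Fin.last k) * ι b) ∧
      tr k b = tr (k + 1)
        ((((t (k + 1) (Fin.last k))⁻¹ : (HeckeAlgebra R (q1 : R) (q2 : R) (k + 1))ˣ) :
          HeckeAlgebra R (q1 : R) (q2 : R) (k + 1)) * ι b))

include ht in
lemma tinv_eq (k : ℕ) (i : Fin k) :
    (((t k i)⁻¹ : (HeckeAlgebra R (q1 : R) (q2 : R) k)ˣ) :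
        HeckeAlgebra R (q1 : R) (q2 : R) k) =
      algebraMap R _ ((((q1 * q2)⁻¹ : Rˣ) : R)) *
        (algebraMap R _ ((q1 : R) + (q2 : R)) - heckeT R (q1 : R) (q2 : R) k i) := by
  set T := heckeT R (q1 : R) (q2 : R) k i with hT
  have hq := heckeT_quad (q1 : R) (q2 : R) k i
  rw [← hT] at hq
  apply Units.inv_eq_of_mul_eq_one_right
  rw [ht k i, ← hT]
  rw [← mul_assoc, ← Algebra.commutes ((((q1 * q2)⁻¹ : Rˣ) : R)) T, mul_assoc,
    mul_sub, ← Algebra.commutes ((q1 : R) + (q2 : R)) T, hq, sub_sub_cancel,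
    ← map_mul, show (((q1 * q2)⁻¹ : Rˣ) : R) * ((q1 : R) * (q2 : R)) = 1 by
      rw [← Units.val_mul, ← Units.val_mul, inv_mul_cancel, Units.val_one],
    map_one]

lemma tr_alg (k : ℕ) (a : R) (x : HeckeAlgebra R (q1 : R) (q2 : R) k) :
    tr k (algebraMap R _ a * x) = a * tr k x := by
  rw [← Algebra.smul_def, map_smul, smul_eq_mul]

include hu ht hmarkov in
lemma tr_incl (k : ℕ) (c : HeckeAlgebra R (q1 : R) (q2 : R) k) :
    tr (k + 1) (incl (q1 : R) (q2 : R) k c) =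
      (1 + (q1 : R) * (q2 : R)) * ((u⁻¹ : Rˣ) : R) * tr k c := by
  obtain ⟨h1, h2⟩ := hmarkov k (incl (q1 : R) (q2 : R) k) (incl_gen _ _ k) c
  rw [tinv_eq q1 q2 t ht, mul_assoc, sub_mul, tr_alg q1 q2 tr, map_sub,
    tr_alg q1 q2 tr, ← h1] at h2
  set X := tr (k + 1) (incl (q1 : R) (q2 : R) k c) with hX
  have hinv : (((q1 * q2)⁻¹ : Rˣ) : R) * ((q1 : R) * (q2 : R)) = 1 := by
    rw [← Units.val_mul, ← Units.val_mul, inv_mul_cancel, Units.val_one]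
  have h3 : ((q1 : R) * (q2 : R)) * tr k c = ((q1 : R) + (q2 : R)) * X - tr k c := by
    linear_combination ((q1 : R) * (q2 : R)) * h2 +
      ((((q1 : R) + (q2 : R)) * X - tr k c)) * hinv
  have key : (u : R) * X = (1 + (q1 : R) * (q2 : R)) * tr k c := by
    rw [hu]; linear_combination -h3
  calc X = ((u⁻¹ : Rˣ) : R) * ((u : R) * X) := by
        rw [← mul_assoc, ← Units.val_mul, inv_mul_cancel, Units.val_one, one_mul]
    _ = (1 + (q1 : R) * (q2 : R)) * ((u⁻¹ : Rˣ) : R) * tr k c := by rw [key]; ring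

include hcomm hmarkov in
lemma peel (s : ℕ) (W : List ℕ) (hW : ∀ x ∈ W, x < s) :
    ∀ k : ℕ,
      tr (s + k) (wprod (q1 : R) (q2 : R) (s + k)
          (W ++ (List.range k).reverse.map (· + s))) =
        tr s (wprod (q1 : R) (q2 : R) s W) := by
  intro k
  induction k with
  | zero => simp
  | succ k ih =>
      show tr (s + k + 1) (wprod (q1 : R) (q2 : R) (s + k + 1)
          (W ++ (List.range (k + 1)).reverse.map (· + s))) =
        tr s (wprod (q1 : R) (q2 : R) s W)
      have hks : k + s < s + k + 1 := by omega
      have hfin : (⟨k + s, hks⟩ : Fin (s + k + 1)) = Fin.last (s + k) := by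
        ext; simp [Fin.last]; omega
      have hbound : ∀ x ∈ (List.range k).reverse.map (· + s) ++ W, x < s + k := by
        intro x hx
        rcases List.mem_append.mp hx with hx | hx
        · obtain ⟨y, hy, rfl⟩ := List.mem_map.mp hx
          have := List.mem_range.mp (List.mem_reverse.mp hy); omega
        · have := hW x hx; omega
      rw [List.range_succ, List.reverse_append, List.reverse_singleton,
        List.singleton_append, List.map_cons, wprod_append, wprod_cons,
        dif_pos hks, hfin]
      rw [hcomm _ (wprod (q1 : R) (q2 : R) (s + k + 1) W)
        (heckeT R (q1 : R) (q2 : R) (s + k + 1) (Fin.last (s + k)) *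
          wprod (q1 : R) (q2 : R) (s + k + 1)
            ((List.range k).reverse.map (· + s))), mul_assoc]
      rw [show wprod (q1 : R) (q2 : R) (s + k + 1) ((List.range k).reverse.map (· + s)) *
            wprod (q1 : R) (q2 : R) (s + k + 1) W =
          incl (q1 : R) (q2 : R) (s + k)
            (wprod (q1 : R) (q2 : R) (s + k) ((List.range k).reverse.map (· + s) ++ W)) by
        rw [incl_wprod _ _ _ _ hbound, wprod_append]]
      rw [← (hmarkov (s + k) (incl (q1 : R) (q2 : R) (s + k)) (incl_gen _ _ _) _).1]
      rw [wprod_append, hcomm, ← wprod_append]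
      exact ih

include hu ht hcomm hmarkov in
lemma main_lemma :
    ∀ (lam : List ℕ) (m : ℕ), lam.sum = m + 1 → (∀ x ∈ lam, 0 < x) →
      tr m (wprod (q1 : R) (q2 : R) m (blockWord lam)) =
        ((1 + (q1 : R) * (q2 : R)) * ((u⁻¹ : Rˣ) : R)) ^ (lam.length - 1) * tr 0 1 := by
  intro lam
  induction lam using List.reverseRecOn with
  | nil => intro m hm _; simp at hm
  | append_singleton init a ih =>
      intro m hm hpos
      have ha : 0 < a := hpos a (by simp)
      have hm2 : m = init.sum + (a - 1) := by
        simp only [List.sum_append, List.sum_cons, List.sum_nil, add_zero] at hm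
        omega
      subst hm2
      have hbw : blockWord (init ++ [a]) =
          blockWord init ++ (List.range (a - 1)).reverse.map (· + init.sum) := by
        rw [blockWord_append]
        simp [blockWord]
      have hWlt : ∀ x ∈ blockWord init, x < init.sum := fun x hx => by
        have := blockWord_lt init x hx; omega
      rw [hbw, peel q1 q2 tr t hcomm hmarkov init.sum (blockWord init) hWlt (a - 1)]
      cases init with
      | nil =>
          simp [blockWord, wprod_nil]
          rfl
      | cons b init' =>
          have hb : 0 < b := hpos b (by simp)
          obtain ⟨s', hs'⟩ : ∃ s', (b :: init').sum = s' + 1 :=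
            ⟨(b :: init').sum - 1, by simp only [List.sum_cons]; omega⟩
          rw [hs']
          rw [← incl_wprod (q1 : R) (q2 : R) s' (blockWord (b :: init'))
            (fun x hx => by have := blockWord_lt (b :: init') x hx; omega)]
          rw [tr_incl q1 q2 u hu tr t ht hmarkov s' _]
          rw [ih s' hs' (fun x hx => hpos x (List.mem_append_left _ hx))]
          rw [← mul_assoc, ← pow_succ']
          congr 2
          simp only [List.length_append, List.length_cons, List.length_nil, List.length_singleton]
          omega

end Trace
/-- For a partition `λ` of `n` with `k` parts, any normalized Markov trace satisfies
`tr(T_{b_λ}) = ((1+q1q2)/(q1+q2))^(k-1) · tr(id_1)`. -/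
theorem markovTrace_blockBraid {R : Type*} [CommRing R] [IsDomain R] (q1 q2 : Rˣ)
    (u : Rˣ) (hu : (u : R) = (q1 : R) + (q2 : R))
    (tr : ∀ k : ℕ, HeckeAlgebra R (q1 : R) (q2 : R) k →ₗ[R] R)
    (t : ∀ (k : ℕ) (i : Fin k), (HeckeAlgebra R (q1 : R) (q2 : R) k)ˣ)
    (ht : ∀ (k : ℕ) (i : Fin k),
      ((t k i : (HeckeAlgebra R (q1 : R) (q2 : R) k)ˣ) : HeckeAlgebra R (q1 : R) (q2 : R) k) =
        heckeT R (q1 : R) (q2 : R) k i)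
    (hcomm : ∀ (k : ℕ) (a b : HeckeAlgebra R (q1 : R) (q2 : R) k),
      tr k (a * b) = tr k (b * a))
    (hmarkov : ∀ (k : ℕ)
      (ι : HeckeAlgebra R (q1 : R) (q2 : R) k →ₐ[R] HeckeAlgebra R (q1 : R) (q2 : R) (k + 1)),
      (∀ i : Fin k, ι (heckeT R (q1 : R) (q2 : R) k i) =
        heckeT R (q1 : R) (q2 : R) (k + 1) i.castSucc) →
      ∀ b : HeckeAlgebra R (q1 : R) (q2 : R) k,
        tr k b = tr (k + 1) (heckeT R (q1 : R) (q2 : R) (k + 1) (Fin.last k) * ι b) ∧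
        tr k b = tr (k + 1)
          ((((t (k + 1) (Fin.last k))⁻¹ : (HeckeAlgebra R (q1 : R) (q2 : R) (k + 1))ˣ) :
            HeckeAlgebra R (q1 : R) (q2 : R) (k + 1)) * ι b))
    (m : ℕ) (lam : List ℕ) (hlam : IsPartition (m + 1) lam)
    (hlt : ∀ x ∈ blockWord lam, x < m) :
    tr m (((blockWord lam).pmap (fun x hx => heckeT R (q1 : R) (q2 : R) m ⟨x, hx⟩) hlt).prod) =
      ((1 + (q1 : R) * (q2 : R)) * ((u⁻¹ : Rˣ) : R)) ^ (lam.length - 1) * tr 0 1 := by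
  rw [wprod_eq_pmap (q1 : R) (q2 : R) m (blockWord lam) hlt]
  exact main_lemma q1 q2 u hu tr t ht hcomm hmarkov lam m hlam.2.2 hlam.2.1
end
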